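/- Let V be a real vector space equipped with a hypercomplex structure (I, J) and K := I∘J. For a real alternating 2-form γ on V satisfying γ(IX, IY) = γ(X, Y) and γ(JX, JY) = −γ(X, Y) for all X, Y (a J-anti-invariant real (1,1)-form with respect to I), define Φ(γ)(X, Y) := (i·γ(JX, Y) − γ(KX, Y))/2. Then Φ(γ) is an ℝ-bilinear alternating complex-valued form satisfying Φ(γ)(IX, Y) = i·Φ(γ)(X, Y) and conj(Φ(γ)(JX, JY)) = Φ(γ)(X, Y) for all X, Y, and γ ↦ Φ(γ) is an ℝ-linear bijection from the space of J-anti-invariant real (1,1)-forms with respect to I onto the space of q-real (2,0)-forms (i.e. ℝ-bilinear alternating complex-valued forms φ with φ(IX, Y) = i·φ(X, Y) and conj(φ(JX, JY)) = φ(X, Y) for all X, Y), with inverse given by φ ↦ ((X, Y) ↦ −2·Im φ(JX, Y)). Moreover, Φ(γ)(X, JX) > 0 for all X ≠ 0 if and only if γ(X, IX) > 0 for all X ≠ 0; that is, Φ(γ) is q-positive if and only if γ is positive. -/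

import Mathlib

/-!
A form `φ` with `φ (I X) Y = i φ X Y` is determined by its imaginary part, since
`Re φ (X, Y) = Im φ (I X, Y)`. Writing `Φ(γ)(X, Y) = β (I X) Y + i β X Y` with `β := γ (J ·) · / 2`,
`Φ` and `φ ↦ -2 Im φ (J ·, ·)` are mutually inverse. Under this dictionary `I`-invariance of `γ`
matches `I`-linearity of `Φ(γ)`, `J`-anti-invariance matches q-reality, and `Φ(γ)(X, J X)` is the
real number `γ(X, I X) / 2`.
-/

open ComplexOrder

/-- The map `Φ(γ)(X,Y) := (i·γ(JX,Y) − γ(KX,Y))/2`, with `K := I∘J`. -/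
noncomputable def PhiMap {V : Type*} [AddCommGroup V] [Module ℝ V]
    (I J : Module.End ℝ V) (γ : V →ₗ[ℝ] V →ₗ[ℝ] ℝ) (X Y : V) : ℂ :=
  (Complex.I * (γ (J X) Y : ℂ) - (γ ((I * J) X) Y : ℂ)) / 2

section Bilinear

variable {R V M : Type*} [CommRing R] [AddCommGroup V] [Module R V] [AddCommGroup M] [Module R M]
  {f g : Module.End R V}

theorem Module.End.apply_apply_of_mul_self_eq_neg_one (hf : f * f = -1) (X : V) :
    f (f X) = -X := by
  simpa using LinearMap.congr_fun hf X

theorem Module.End.apply_apply_of_mul_eq_neg_mul (hfg : f * g = -(g * f)) (X : V) :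
    g (f X) = -f (g X) := by
  simpa [neg_eq_iff_eq_neg] using (LinearMap.congr_fun hfg X).symm

theorem LinearMap.apply_left_eq_apply_right_of_anti_invariant (B : V →ₗ[R] V →ₗ[R] M)
    (hf : f * f = -1) (hB : ∀ X Y, B (f X) (f Y) = -B X Y) (X Y : V) :
    B (f X) Y = B X (f Y) := by
  simpa [f.apply_apply_of_mul_self_eq_neg_one hf] using (hB (f X) Y).symm

theorem LinearMap.apply_left_eq_neg_apply_right_of_invariant (B : V →ₗ[R] V →ₗ[R] M)
    (hf : f * f = -1) (hB : ∀ X Y, B (f X) (f Y) = B X Y) (X Y : V) :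
    B (f X) Y = -B X (f Y) := by
  rw [← hB X (f Y), f.apply_apply_of_mul_self_eq_neg_one hf, map_neg, neg_neg]

end Bilinear

section Forms

variable {V : Type*} [AddCommGroup V] [Module ℝ V] {I J : Module.End ℝ V}

section PhiMap

theorem PhiMap_re (γ : V →ₗ[ℝ] V →ₗ[ℝ] ℝ) (X Y : V) :
    (PhiMap I J γ X Y).re = -γ (I (J X)) Y / 2 := by
  simp [PhiMap]

theorem PhiMap_im (γ : V →ₗ[ℝ] V →ₗ[ℝ] ℝ) (X Y : V) :
    (PhiMap I J γ X Y).im = γ (J X) Y / 2 := by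
  simp [PhiMap]

theorem PhiMap_add (γ₁ γ₂ : V →ₗ[ℝ] V →ₗ[ℝ] ℝ) (X Y : V) :
    PhiMap I J (γ₁ + γ₂) X Y = PhiMap I J γ₁ X Y + PhiMap I J γ₂ X Y := by
  simp only [PhiMap, LinearMap.add_apply]
  push_cast
  ring

theorem PhiMap_smul (c : ℝ) (γ : V →ₗ[ℝ] V →ₗ[ℝ] ℝ) (X Y : V) :
    PhiMap I J (c • γ) X Y = c * PhiMap I J γ X Y := by
  simp only [PhiMap, LinearMap.smul_apply, smul_eq_mul]
  push_cast
  ring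

theorem PhiMap_apply_I_left (hI : I * I = -1) (hIJ : I * J = -(J * I))
    (γ : V →ₗ[ℝ] V →ₗ[ℝ] ℝ) (X Y : V) :
    PhiMap I J γ (I X) Y = Complex.I * PhiMap I J γ X Y := by
  have hJI := I.apply_apply_of_mul_eq_neg_mul hIJ X
  apply Complex.ext <;>
    simp [PhiMap_re, PhiMap_im, hJI, I.apply_apply_of_mul_self_eq_neg_one hI, neg_div]

theorem neg_two_mul_im_PhiMap_J_left (hJ : J * J = -1) (γ : V →ₗ[ℝ] V →ₗ[ℝ] ℝ) (X Y : V) :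
    -2 * (PhiMap I J γ (J X) Y).im = γ X Y := by
  rw [PhiMap_im, J.apply_apply_of_mul_self_eq_neg_one hJ, map_neg, LinearMap.neg_apply]
  ring

variable {γ : V →ₗ[ℝ] V →ₗ[ℝ] ℝ}

theorem PhiMap_swap (hI : I * I = -1) (hJ : J * J = -1) (hIJ : I * J = -(J * I))
    (hγ : ∀ X Y, γ X Y = -γ Y X) (hγI : ∀ X Y, γ (I X) (I Y) = γ X Y)
    (hγJ : ∀ X Y, γ (J X) (J Y) = -γ X Y) (X Y : V) :
    PhiMap I J γ X Y = -PhiMap I J γ Y X := by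
  have hγJ' := LinearMap.apply_left_eq_apply_right_of_anti_invariant γ hJ hγJ
  have hγI' := LinearMap.apply_left_eq_neg_apply_right_of_invariant γ hI hγI
  apply Complex.ext
  · simp only [PhiMap_re, Complex.neg_re]
    rw [hγI', hγJ', I.apply_apply_of_mul_eq_neg_mul hIJ, hγ X, map_neg, LinearMap.neg_apply]
    ring
  · simp only [PhiMap_im, Complex.neg_im]
    rw [hγJ', hγ X]
    ring

theorem conj_PhiMap_J_J (hJ : J * J = -1) (hIJ : I * J = -(J * I))
    (hγJ : ∀ X Y, γ (J X) (J Y) = -γ X Y) (X Y : V) :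
    starRingEnd ℂ (PhiMap I J γ (J X) (J Y)) = PhiMap I J γ X Y := by
  have hγJ' := LinearMap.apply_left_eq_apply_right_of_anti_invariant γ hJ hγJ
  apply Complex.ext
  · simp only [Complex.conj_re, PhiMap_re, J.apply_apply_of_mul_self_eq_neg_one hJ, map_neg,
      LinearMap.neg_apply, neg_neg]
    rw [← hγJ', I.apply_apply_of_mul_eq_neg_mul hIJ, map_neg, LinearMap.neg_apply]
  · simp only [Complex.conj_im, PhiMap_im, J.apply_apply_of_mul_self_eq_neg_one hJ, map_neg,
      LinearMap.neg_apply, hγJ']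
    ring

theorem PhiMap_apply_J_self (hIJ : I * J = -(J * I)) (hγ : ∀ X Y, γ X Y = -γ Y X)
    (hγJ : ∀ X Y, γ (J X) (J Y) = -γ X Y) (X : V) :
    PhiMap I J γ X (J X) = (γ X (I X) / 2 : ℝ) := by
  have hγ_self : γ (J X) (J X) = 0 := by linarith [hγ (J X) (J X)]
  apply Complex.ext
  · rw [PhiMap_re, ← neg_neg (I (J X)), ← I.apply_apply_of_mul_eq_neg_mul hIJ, map_neg,
      LinearMap.neg_apply, hγJ, hγ (I X)]
    simp
  · simp [PhiMap_im, hγ_self]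

theorem PhiMap_qPositive_iff (hIJ : I * J = -(J * I)) (hγ : ∀ X Y, γ X Y = -γ Y X)
    (hγJ : ∀ X Y, γ (J X) (J Y) = -γ X Y) :
    (∀ X : V, X ≠ 0 → 0 < PhiMap I J γ X (J X)) ↔ ∀ X : V, X ≠ 0 → 0 < γ X (I X) := by
  simp only [PhiMap_apply_J_self hIJ hγ hγJ, Complex.zero_lt_real,
    div_pos_iff_of_pos_right (two_pos : (0 : ℝ) < 2)]

end PhiMap

section Inverse

noncomputable def phiInv (J : Module.End ℝ V) (φ : V →ₗ[ℝ] V →ₗ[ℝ] ℂ) : V →ₗ[ℝ] V →ₗ[ℝ] ℝ :=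
  (-2 : ℝ) • (φ ∘ₗ J).compr₂ Complex.imLm

@[simp]
theorem phiInv_apply (φ : V →ₗ[ℝ] V →ₗ[ℝ] ℂ) (X Y : V) :
    phiInv J φ X Y = -2 * (φ (J X) Y).im := by
  simp [phiInv]

variable {φ : V →ₗ[ℝ] V →ₗ[ℝ] ℂ}

theorem apply_J_right_of_qReal (hJ : J * J = -1)
    (hφJ : ∀ X Y, starRingEnd ℂ (φ (J X) (J Y)) = φ X Y) (X Y : V) :
    φ X (J Y) = -starRingEnd ℂ (φ (J X) Y) := by
  rw [← hφJ, J.apply_apply_of_mul_self_eq_neg_one hJ, map_neg, map_neg]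

theorem phiInv_swap (hJ : J * J = -1) (hφ : ∀ X Y, φ X Y = -φ Y X)
    (hφJ : ∀ X Y, starRingEnd ℂ (φ (J X) (J Y)) = φ X Y) (X Y : V) :
    phiInv J φ X Y = -phiInv J φ Y X := by
  simp [hφ (J Y), apply_J_right_of_qReal hJ hφJ]

theorem phiInv_I_I (hIJ : I * J = -(J * I))
    (hφ : ∀ X Y, φ X Y = -φ Y X) (hφI : ∀ X Y, φ (I X) Y = Complex.I * φ X Y) (X Y : V) :
    phiInv J φ (I X) (I Y) = phiInv J φ X Y := by
  have hφI_right : ∀ X Y, φ X (I Y) = Complex.I * φ X Y := fun X Y ↦ by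
    rw [hφ, hφI, hφ Y, mul_neg, neg_neg]
  simp [I.apply_apply_of_mul_eq_neg_mul hIJ, hφI, hφI_right, ← mul_assoc]

theorem phiInv_J_J (hJ : J * J = -1)
    (hφJ : ∀ X Y, starRingEnd ℂ (φ (J X) (J Y)) = φ X Y) (X Y : V) :
    phiInv J φ (J X) (J Y) = -phiInv J φ X Y := by
  simp [J.apply_apply_of_mul_self_eq_neg_one hJ, apply_J_right_of_qReal hJ hφJ]

theorem PhiMap_phiInv (hJ : J * J = -1) (hIJ : I * J = -(J * I))
    (hφI : ∀ X Y, φ (I X) Y = Complex.I * φ X Y) (X Y : V) :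
    PhiMap I J (phiInv J φ) X Y = φ X Y := by
  have hJIJ : J (I (J X)) = I X := by
    rw [I.apply_apply_of_mul_eq_neg_mul hIJ, J.apply_apply_of_mul_self_eq_neg_one hJ, map_neg,
      neg_neg]
  apply Complex.ext
  · simp [PhiMap_re, hJIJ, hφI]
  · simp [PhiMap_im, J.apply_apply_of_mul_self_eq_neg_one hJ]

end Inverse

end Forms

/-- `Φ` is an ℝ-linear bijection from `J`-anti-invariant real
`(1,1)`-forms (w.r.t. `I`) onto q-real `(2,0)`-forms, with inverse
`φ ↦ ((X,Y) ↦ −2·Im φ(JX,Y))`; moreover `Φ(γ)` is q-positive iff `γ` is positive. -/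
theorem Phi_bijection
    {V : Type*} [AddCommGroup V] [Module ℝ V]
    (I J : Module.End ℝ V)
    (hI : I * I = -1) (hJ : J * J = -1) (hIJ : I * J = -(J * I)) :
    (∀ γ : V →ₗ[ℝ] V →ₗ[ℝ] ℝ,
      (∀ X Y : V, γ X Y = -(γ Y X)) →
      (∀ X Y : V, γ (I X) (I Y) = γ X Y) →
      (∀ X Y : V, γ (J X) (J Y) = -(γ X Y)) →
        ((∀ X Y : V, PhiMap I J γ X Y = -(PhiMap I J γ Y X)) ∧
         (∀ X Y : V, PhiMap I J γ (I X) Y = Complex.I * PhiMap I J γ X Y) ∧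
         (∀ X Y : V, (starRingEnd ℂ) (PhiMap I J γ (J X) (J Y)) = PhiMap I J γ X Y) ∧
         (∀ X Y : V, -2 * (PhiMap I J γ (J X) Y).im = γ X Y) ∧
         ((∀ X : V, X ≠ 0 → 0 < PhiMap I J γ X (J X)) ↔
           (∀ X : V, X ≠ 0 → 0 < γ X (I X))))) ∧
    (∀ γ₁ γ₂ : V →ₗ[ℝ] V →ₗ[ℝ] ℝ, ∀ X Y : V,
      PhiMap I J (γ₁ + γ₂) X Y = PhiMap I J γ₁ X Y + PhiMap I J γ₂ X Y) ∧
    (∀ (c : ℝ) (γ : V →ₗ[ℝ] V →ₗ[ℝ] ℝ), ∀ X Y : V,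
      PhiMap I J (c • γ) X Y = (c : ℂ) * PhiMap I J γ X Y) ∧
    (∀ φ : V →ₗ[ℝ] V →ₗ[ℝ] ℂ,
      (∀ X Y : V, φ X Y = -(φ Y X)) →
      (∀ X Y : V, φ (I X) Y = Complex.I * φ X Y) →
      (∀ X Y : V, (starRingEnd ℂ) (φ (J X) (J Y)) = φ X Y) →
        ∃ γ : V →ₗ[ℝ] V →ₗ[ℝ] ℝ,
          (∀ X Y : V, γ X Y = -(γ Y X)) ∧
          (∀ X Y : V, γ (I X) (I Y) = γ X Y) ∧
          (∀ X Y : V, γ (J X) (J Y) = -(γ X Y)) ∧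
          (∀ X Y : V, γ X Y = -2 * (φ (J X) Y).im) ∧
          (∀ X Y : V, PhiMap I J γ X Y = φ X Y)) := by
  refine ⟨fun γ hγ hγI hγJ ↦ ⟨?_, ?_, ?_, ?_, ?_⟩, PhiMap_add, PhiMap_smul,
    fun φ hφ hφI hφJ ↦ ⟨phiInv J φ, ?_, ?_, ?_, ?_, ?_⟩⟩
  · exact PhiMap_swap hI hJ hIJ hγ hγI hγJ
  · exact PhiMap_apply_I_left hI hIJ γ
  · exact conj_PhiMap_J_J hJ hIJ hγJ
  · exact neg_two_mul_im_PhiMap_J_left hJ γ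
  · exact PhiMap_qPositive_iff hIJ hγ hγJ
  · exact phiInv_swap hJ hφ hφJ
  · exact phiInv_I_I hIJ hφ hφI
  · exact phiInv_J_J hJ hφJ
  · exact phiInv_apply φ
  · exact PhiMap_phiInv hJ hIJ hφI
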